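/- Let I ⊆ ℝ∖{0,1} be an open interval and let F₁₂, F₁₃, F₂₃ : I → ℝ be differentiable functions satisfying the system F₁₂′(z) = F₁₃(z)F₂₃(z)/(z(z−1)), F₁₃′(z) = −F₁₂(z)F₂₃(z)/(z−1), F₂₃′(z) = F₁₂(z)F₁₃(z)/z on I. Then the function I(z) = F₁₂(z)² + F₁₃(z)² + F₂₃(z)² is constant on I. -/

import Mathlib

/-!
Along a solution, `(F₁₂² + F₁₃² + F₂₃²)' = 2 F₁₂ F₁₃ F₂₃ (1/(z(z-1)) - 1/(z-1) + 1/z)`, and the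
bracket vanishes identically by partial fractions, `1/(z(z-1)) = 1/(z-1) - 1/z`. A function with
zero derivative on an interval is constant.
-/

theorem Convex.eq_of_forall_hasDerivAt_zero {𝕜 G : Type*} [RCLike 𝕜] [NormedAddCommGroup G]
    [NormedSpace 𝕜 G] {f : 𝕜 → G} {s : Set 𝕜} (hs : Convex ℝ s)
    (hf : ∀ x ∈ s, HasDerivAt f 0 x) {x y : 𝕜} (hx : x ∈ s) (hy : y ∈ s) : f x = f y := by
  have hlip := hs.norm_image_sub_le_of_norm_hasDerivWithin_le (C := 0)
    (fun z hz => (hf z hz).hasDerivWithinAt) (fun _ _ => norm_zero.le) hy hx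
  rw [zero_mul, norm_le_zero_iff, sub_eq_zero] at hlip
  exact hlip

theorem hasDerivAt_darbouxEgorov_sq_sum {F12 F13 F23 : ℝ → ℝ} {z : ℝ} (hz0 : z ≠ 0)
    (hz1 : z ≠ 1)
    (hF12 : HasDerivAt F12 (F13 z * F23 z / (z * (z - 1))) z)
    (hF13 : HasDerivAt F13 (-(F12 z * F23 z) / (z - 1)) z)
    (hF23 : HasDerivAt F23 (F12 z * F13 z / z) z) :
    HasDerivAt (fun z => F12 z ^ 2 + F13 z ^ 2 + F23 z ^ 2) 0 z := by
  have hz1' : z - 1 ≠ 0 := sub_ne_zero.mpr hz1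
  refine (((hF12.pow 2).add (hF13.pow 2)).add (hF23.pow 2)).congr_deriv ?_
  field_simp
  ring

theorem stmt_2 (I : Set ℝ) (hIconn : I.OrdConnected)
    (h0 : (0 : ℝ) ∉ I) (h1 : (1 : ℝ) ∉ I)
    (F12 F13 F23 : ℝ → ℝ)
    (hF12 : ∀ z ∈ I, HasDerivAt F12 (F13 z * F23 z / (z * (z - 1))) z)
    (hF13 : ∀ z ∈ I, HasDerivAt F13 (-(F12 z * F23 z) / (z - 1)) z)
    (hF23 : ∀ z ∈ I, HasDerivAt F23 (F12 z * F13 z / z) z) :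
    ∀ z ∈ I, ∀ w ∈ I,
      F12 z ^ 2 + F13 z ^ 2 + F23 z ^ 2 = F12 w ^ 2 + F13 w ^ 2 + F23 w ^ 2 := by
  intro z hz w hw
  refine hIconn.convex.eq_of_forall_hasDerivAt_zero
    (f := fun z => F12 z ^ 2 + F13 z ^ 2 + F23 z ^ 2) (fun x hx => ?_) hz hw
  exact hasDerivAt_darbouxEgorov_sq_sum (ne_of_mem_of_not_mem hx h0) (ne_of_mem_of_not_mem hx h1)
    (hF12 x hx) (hF13 x hx) (hF23 x hx)
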